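/- Assume (H_c), and assume a₊ is differentiable at every point u with a₊(u) < +∞. Fix σ ≥ σ_s and u₀ ∈ (0,1), and define 𝒢_σ(u) := ∫_{u₀}^u ℋ(δ,𝒱_σ(δ)) dδ for u ∈ (0,1) and S_σ := {ξ ∈ ℝ : there exists u ∈ (0,1) with 𝒢_σ(u) = ξ and 𝒢_σ'(u) = 0}. If the set W_σ := {u ∈ [0,1] : a₊(u) < +∞ and a₊'(u) = σ} is finite, then S_σ is finite. -/

import Mathlib

open Set Filter Topology
open scoped ENNReal

noncomputable section

/-- The strip `Ω` between `-ω` and `ω` over `[0,1]`: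
`Ω = {(u,s) : u ∈ [0,1], -ω(u) < s < ω(u)}`. -/
def OmegaSet (ω : ℝ → ℝ≥0∞) : Set (ℝ × ℝ) :=
  {p | p.1 ∈ Set.Icc (0:ℝ) 1 ∧ ENNReal.ofReal |p.2| < ω p.1}

/-- The set `𝒟` between `a₋ = -a₊` and `a₊` over `[0,1]`. -/
def DSet (aplus : ℝ → ℝ≥0∞) : Set (ℝ × ℝ) :=
  {p | p.1 ∈ Set.Icc (0:ℝ) 1 ∧ ENNReal.ofReal |p.2| < aplus p.1}

/-- Standing data and hypotheses: a lower semicontinuous width `ω : [0,1] → (0,∞]`,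
a regular flux `a` on `Ω` (odd in `s`, C¹, with `∂a/∂s > 0`), the maximal fluxes
`a₊(u) = lim_{s→ω(u)⁻} a(u,s)` (equivalently, the supremum over `0 < s < ω(u)`),
which are `+∞` whenever `ω(u) < ∞`, the partial inverse `g` on `𝒟` defined by
`a(u, g(u,v)) = v`, and a logistic-type reaction term `f`. -/
structure FluxData where
  ω : ℝ → ℝ≥0∞
  a : ℝ → ℝ → ℝ
  aplus : ℝ → ℝ≥0∞
  g : ℝ → ℝ → ℝ
  f : ℝ → ℝ
  ω_pos : ∀ u ∈ Set.Icc (0:ℝ) 1, 0 < ω u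
  ω_lsc : LowerSemicontinuousOn ω (Set.Icc (0:ℝ) 1)
  a_odd : ∀ u s, (u, s) ∈ OmegaSet ω → a u (-s) = - a u s
  a_C1 : ContDiffOn ℝ 1 (fun p : ℝ × ℝ => a p.1 p.2) (OmegaSet ω)
  a_deriv_pos : ∀ u s, (u, s) ∈ OmegaSet ω → ∃ d : ℝ, 0 < d ∧ HasDerivAt (a u) d s
  aplus_def : ∀ u ∈ Set.Icc (0:ℝ) 1,
      aplus u = ⨆ s ∈ {s : ℝ | 0 < s ∧ (u, s) ∈ OmegaSet ω}, ENNReal.ofReal (a u s)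
  aplus_pos : ∀ u ∈ Set.Icc (0:ℝ) 1, 0 < aplus u
  aplus_top : ∀ u ∈ Set.Icc (0:ℝ) 1, ω u < ⊤ → aplus u = ⊤
  g_spec : ∀ p ∈ DSet aplus, (p.1, g p.1 p.2) ∈ OmegaSet ω ∧ a p.1 (g p.1 p.2) = p.2
  f_C1 : ContDiffOn ℝ 1 f (Set.Icc (0:ℝ) 1)
  f_zero : f 0 = 0
  f_one : f 1 = 0
  f_pos : ∀ u ∈ Set.Ioo (0:ℝ) 1, 0 < f u

/-- A classic traveling wave of `u_t = (b(u,u_x))_x + f(u)` moving at speed `σ`: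
a C² increasing profile `u` with values in `(0,1)`, `0 < u' < ω(u)`, connecting
`0` at `-∞` to `1` at `+∞`, such that `ξ ↦ b(u(ξ),u'(ξ))` is differentiable and
`(b(u,u'))' - σ u' + f(u) = 0`. -/
def IsClassicTW (F : FluxData) (b : ℝ → ℝ → ℝ) (σ : ℝ) (u : ℝ → ℝ) : Prop :=
  ContDiff ℝ 2 u ∧
  (∀ ξ : ℝ, u ξ ∈ Set.Ioo (0:ℝ) 1) ∧
  (∀ ξ : ℝ, 0 < deriv u ξ ∧ ENNReal.ofReal (deriv u ξ) < F.ω (u ξ)) ∧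
  Filter.Tendsto u Filter.atBot (nhds 0) ∧
  Filter.Tendsto u Filter.atTop (nhds 1) ∧
  (∀ ξ : ℝ, HasDerivAt (fun t => b (u t) (deriv u t)) (σ * deriv u ξ - F.f (u ξ)) ξ)

/-- A right solution with speed `σ`: `V : (α,1] → ℝ`, continuous on `(α,1]`,
C¹ on `(α,1)`, `V(1) = 0`, and on `(α,1)` : `V > 0`, `(u,V(u)) ∈ 𝒟` and
`V' = σ - f(u)/g(u,V(u))`. -/
def IsRightSolution (F : FluxData) (σ α : ℝ) (V : ℝ → ℝ) : Prop :=
  α ∈ Set.Ico (0:ℝ) 1 ∧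
  ContinuousOn V (Set.Ioc α 1) ∧
  V 1 = 0 ∧
  ∀ u ∈ Set.Ioo α 1, 0 < V u ∧ (u, V u) ∈ DSet F.aplus ∧
    HasDerivAt V (σ - F.f u / F.g u (V u)) u

open Classical in
/-- `ℋ(u,V) = 1/g(u,V)` if `0 < V < a₊(u)`, and `0` if `V ≥ a₊(u)`. -/
def Hfun (F : FluxData) (u V : ℝ) : ℝ :=
  if ENNReal.ofReal V < F.aplus u then 1 / F.g u V else 0

/-- The solution `𝒱_σ` of the extended problem: continuous on `[0,1]`, C¹ on `(0,1)`,
`𝒱(1) = 0`, `𝒱 > 0` on `(0,1)` and `𝒱' = σ - f(u)·ℋ(u,𝒱(u))` on `(0,1)`. -/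
def IsVsol (F : FluxData) (σ : ℝ) (V : ℝ → ℝ) : Prop :=
  ContinuousOn V (Set.Icc (0:ℝ) 1) ∧ V 1 = 0 ∧
  (∀ u ∈ Set.Ioo (0:ℝ) 1, 0 < V u) ∧
  (∀ u ∈ Set.Ioo (0:ℝ) 1, HasDerivAt V (σ - F.f u * Hfun F u (V u)) u)

open MeasureTheory

/-! Off the saturated set `S = {u | a₊(u) ≤ 𝒱_σ(u)}` the integrand `ℋ(u, 𝒱_σ(u)) = 1/g(u, 𝒱_σ(u))`
is positive and continuous, so every critical point of `𝒢_σ` lies in `S`, where `ℋ` vanishes and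
`𝒢_σ` is constant along intervals. Take a maximal interval `[a, b] ⊆ S` around a critical point.
If `a = 0`, the critical value is the common value of `𝒢_σ` on such intervals. Otherwise
`𝒱_σ - a₊` is `≥ 0` on `[a, b]` and `< 0` at points arbitrarily close to `a` on the left and to
`b` on the right; since `𝒱_σ' = σ` on `S`, this forces `a₊'(a) ≤ σ ≤ a₊'(b)`, and Darboux's
theorem yields a point of `W_σ` in `[a, b]`. So the critical values lie in `𝒢_σ(W_σ)` plus one
more value. -/

section IntervalComponent

variable {α : Type*} [ConditionallyCompleteLinearOrder α] [TopologicalSpace α] [OrderTopology α]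
  [DenselyOrdered α] {C : Set α} {u : α}

theorem IsCompact.exists_Icc_subset_frequently_notMem_left [NoMinOrder α] (hC : IsCompact C)
    (hu : u ∈ C) : ∃ a ≤ u, Icc a u ⊆ C ∧ ∃ᶠ t in 𝓝[<] a, t ∉ C := by
  set S := {t | t ≤ u ∧ Icc t u ⊆ C}
  have huS : u ∈ S := ⟨le_rfl, by simpa using hu⟩
  have hSC : S ⊆ C := fun t ht => ht.2 ⟨le_rfl, ht.1⟩
  have hSbdd : BddBelow S := hC.bddBelow.mono hSC
  have haC : sInf S ∈ C :=
    hC.isClosed.closure_subset (closure_mono hSC (csInf_mem_closure ⟨u, huS⟩ hSbdd))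
  have hau : sInf S ≤ u := csInf_le hSbdd huS
  have hIcc : Icc (sInf S) u ⊆ C := by
    rintro x ⟨hax, hxu⟩
    rcases hax.eq_or_lt with rfl | hlt
    · exact haC
    obtain ⟨y, hy, hyx⟩ := exists_lt_of_csInf_lt ⟨u, huS⟩ hlt
    exact hy.2 ⟨hyx.le, hxu⟩
  refine ⟨sInf S, hau, hIcc, fun hev => ?_⟩
  obtain ⟨l, hl, hlC⟩ := mem_nhdsLT_iff_exists_Ioo_subset.1 hev
  obtain ⟨t, hlt, hta⟩ := exists_between hl
  have htS : t ∈ S := by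
    refine ⟨hta.le.trans hau, fun x hx => ?_⟩
    rcases lt_or_ge x (sInf S) with hxa | hxa
    · exact not_not.1 (hlC ⟨hlt.trans_le hx.1, hxa⟩)
    · exact hIcc ⟨hxa, hx.2⟩
  exact (csInf_le hSbdd htS).not_gt hta

theorem IsCompact.exists_Icc_subset_frequently_notMem [NoMinOrder α] [NoMaxOrder α]
    (hC : IsCompact C) (hu : u ∈ C) :
    ∃ a b, a ≤ u ∧ u ≤ b ∧ Icc a b ⊆ C ∧
      (∃ᶠ t in 𝓝[<] a, t ∉ C) ∧ ∃ᶠ t in 𝓝[>] b, t ∉ C := by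
  obtain ⟨a, hau, haC, ha⟩ := IsCompact.exists_Icc_subset_frequently_notMem_left hC hu
  obtain ⟨b, hub, hbC, hb⟩ :=
    IsCompact.exists_Icc_subset_frequently_notMem_left (α := αᵒᵈ) hC hu
  refine ⟨a, b, hau, hub, ?_, ha, hb⟩
  rw [← Icc_union_Icc_eq_Icc hau hub]
  exact union_subset haC fun x hx => hbC ⟨hx.2, hx.1⟩

end IntervalComponent

section DerivSign

variable {f : ℝ → ℝ} {f' x : ℝ}

theorem HasDerivAt.nonneg_of_frequently_lt_left (hf : HasDerivAt f f' x)
    (h : ∃ᶠ t in 𝓝[<] x, f t < f x) : 0 ≤ f' := by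
  by_contra! hneg
  have hslope : Tendsto (slope f x) (𝓝[<] x) (𝓝 f') :=
    (hasDerivWithinAt_iff_tendsto_slope' (s := Iio x) (lt_irrefl x)).1 hf.hasDerivWithinAt
  obtain ⟨t, hft, hst, htx⟩ :=
    (h.and_eventually ((hslope.eventually (gt_mem_nhds hneg)).and self_mem_nhdsWithin)).exists
  rw [slope_def_field, div_neg_iff] at hst
  have htx' : t - x < 0 := sub_neg.2 htx
  rcases hst with ⟨h, -⟩ | ⟨-, h⟩ <;> linarith

theorem HasDerivAt.nonpos_of_frequently_lt_right (hf : HasDerivAt f f' x)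
    (h : ∃ᶠ t in 𝓝[>] x, f t < f x) : f' ≤ 0 := by
  by_contra! hpos
  have hslope : Tendsto (slope f x) (𝓝[>] x) (𝓝 f') :=
    (hasDerivWithinAt_iff_tendsto_slope' (s := Ioi x) (lt_irrefl x)).1 hf.hasDerivWithinAt
  obtain ⟨t, hft, hst, hxt⟩ :=
    (h.and_eventually ((hslope.eventually (lt_mem_nhds hpos)).and self_mem_nhdsWithin)).exists
  rw [slope_def_field, div_pos_iff] at hst
  have hxt' : 0 < t - x := sub_pos.2 hxt
  rcases hst with ⟨h, -⟩ | ⟨-, h⟩ <;> linarith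

end DerivSign

namespace FluxData

section Inverse

variable (F : FluxData) {q s w : ℝ}

theorem mk_zero_mem_OmegaSet {u : ℝ} (hu : u ∈ Icc (0:ℝ) 1) : (u, 0) ∈ OmegaSet F.ω :=
  ⟨hu, by simpa using F.ω_pos u hu⟩

theorem isOpen_setOf_mk_mem_OmegaSet (u : ℝ) : IsOpen {s | (u, s) ∈ OmegaSet F.ω} :=
  show IsOpen {s : ℝ | u ∈ Icc (0:ℝ) 1 ∧ ENNReal.ofReal |s| < F.ω u} from
    isOpen_const.and <| isOpen_lt (ENNReal.continuous_ofReal.comp continuous_abs) continuous_const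

theorem a_zero {u : ℝ} (hu : u ∈ Icc (0:ℝ) 1) : F.a u 0 = 0 := by
  have h := F.a_odd u 0 (F.mk_zero_mem_OmegaSet hu)
  rw [neg_zero] at h
  linarith

theorem strictMonoOn_a {u : ℝ} (hu : u ∈ Icc (0:ℝ) 1) :
    StrictMonoOn (F.a u) {s | (u, s) ∈ OmegaSet F.ω} := by
  have hconvex : Convex ℝ {s | (u, s) ∈ OmegaSet F.ω} := by
    refine convex_iff_ordConnected.2 ⟨fun x hx y hy z hz => ⟨hu, ?_⟩⟩
    exact (ENNReal.ofReal_le_ofReal (abs_le_max_abs_abs hz.1 hz.2)).trans_lt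
      (max_rec' (fun r => ENNReal.ofReal r < F.ω u) hx.2 hy.2)
  refine strictMonoOn_of_deriv_pos hconvex (fun s hs => ?_) fun s hs => ?_
  · obtain ⟨d, -, hd⟩ := F.a_deriv_pos u s hs
    exact hd.continuousAt.continuousWithinAt
  · rw [(F.isOpen_setOf_mk_mem_OmegaSet u).interior_eq] at hs
    obtain ⟨d, hd, hda⟩ := F.a_deriv_pos u s hs
    rwa [hda.deriv]

theorem g_pos {u v : ℝ} (h : (u, v) ∈ DSet F.aplus) (hv : 0 < v) : 0 < F.g u v := by
  obtain ⟨hg, hag⟩ : (u, F.g u v) ∈ OmegaSet F.ω ∧ F.a u (F.g u v) = v := F.g_spec (u, v) h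
  by_contra! hle
  have := (F.strictMonoOn_a h.1).monotoneOn hg (F.mk_zero_mem_OmegaSet h.1) hle
  rw [hag, F.a_zero h.1] at this
  linarith

theorem mk_mem_DSet {u v : ℝ} (hu : u ∈ Icc (0:ℝ) 1) (hv : 0 < v)
    (hlt : ENNReal.ofReal v < F.aplus u) : (u, v) ∈ DSet F.aplus :=
  ⟨hu, by rwa [abs_of_pos hv]⟩

theorem eventually_mem_OmegaSet (hq : q ∈ Ioo (0:ℝ) 1) (hs : (q, s) ∈ OmegaSet F.ω) :
    ∀ᶠ t in 𝓝 q, (t, s) ∈ OmegaSet F.ω := by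
  have hI : Icc (0:ℝ) 1 ∈ 𝓝 q := Icc_mem_nhds hq.1 hq.2
  have hω := F.ω_lsc q hs.1 _ hs.2
  rw [nhdsWithin_eq_nhds.2 hI] at hω
  filter_upwards [hI, hω] with t ht htω using ⟨ht, htω⟩

theorem continuousAt_a_fst (hq : q ∈ Ioo (0:ℝ) 1) (hs : (q, s) ∈ OmegaSet F.ω) :
    ContinuousAt (fun t => F.a t s) q := by
  have hpath : Tendsto (fun t => (t, s)) (𝓝 q) (𝓝[OmegaSet F.ω] (q, s)) :=
    tendsto_nhdsWithin_iff.2 ⟨(continuous_id.prodMk continuous_const).tendsto q,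
      F.eventually_mem_OmegaSet hq hs⟩
  exact (F.a_C1.continuousOn (q, s) hs).tendsto.comp hpath

theorem eventually_lt_g (hq : q ∈ Ioo (0:ℝ) 1) (hs : (q, s) ∈ OmegaSet F.ω)
    (hw : F.a q s < w) :
    ∀ᶠ t in 𝓝 q, ∀ v, w ≤ v → (t, v) ∈ DSet F.aplus → s < F.g t v := by
  filter_upwards [F.eventually_mem_OmegaSet hq hs,
    (F.continuousAt_a_fst hq hs).eventually_lt continuousAt_const hw] with t hts hlt v hv hD
  obtain ⟨hg, hag⟩ : (t, F.g t v) ∈ OmegaSet F.ω ∧ F.a t (F.g t v) = v := F.g_spec (t, v) hD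
  by_contra! hle
  have := (F.strictMonoOn_a hts.1).monotoneOn hg hts hle
  rw [hag] at this
  linarith

theorem eventually_g_lt (hq : q ∈ Ioo (0:ℝ) 1) (hs : (q, s) ∈ OmegaSet F.ω)
    (hw : w < F.a q s) :
    ∀ᶠ t in 𝓝 q, ∀ v, v ≤ w → (t, v) ∈ DSet F.aplus → F.g t v < s := by
  filter_upwards [F.eventually_mem_OmegaSet hq hs,
    continuousAt_const.eventually_lt (F.continuousAt_a_fst hq hs) hw] with t hts hlt v hv hD
  obtain ⟨hg, hag⟩ : (t, F.g t v) ∈ OmegaSet F.ω ∧ F.a t (F.g t v) = v := F.g_spec (t, v) hD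
  by_contra! hle
  have := (F.strictMonoOn_a hts.1).monotoneOn hts hg hle
  rw [hag] at this
  linarith

variable {F} {V : ℝ → ℝ}

theorem continuousAt_g_comp (hq : q ∈ Ioo (0:ℝ) 1) (hVq : ContinuousAt V q)
    (hD : ∀ᶠ t in 𝓝 q, (t, V t) ∈ DSet F.aplus) : ContinuousAt (fun t => F.g t (V t)) q := by
  obtain ⟨hg, hag⟩ : (q, F.g q (V q)) ∈ OmegaSet F.ω ∧ F.a q (F.g q (V q)) = V q :=
    F.g_spec _ hD.self_of_nhds
  have hslice := (F.isOpen_setOf_mk_mem_OmegaSet q).mem_nhds hg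
  have hmono := F.strictMonoOn_a hg.1
  refine tendsto_order.2 ⟨fun l hl => ?_, fun r hr => ?_⟩
  · obtain ⟨l', ⟨hll', hl'⟩, hsub⟩ := exists_Ioc_subset_of_mem_nhds' hslice hl
    have hs : (q, (l' + F.g q (V q)) / 2) ∈ OmegaSet F.ω := hsub ⟨by linarith, by linarith⟩
    obtain ⟨w, hw1, hw2⟩ := exists_between (hag ▸ hmono hs hg (by linarith))
    filter_upwards [F.eventually_lt_g hq hs hw1, continuousAt_const.eventually_lt hVq hw2, hD]
      with t hlt hwt hDt
    linarith [hlt _ hwt.le hDt]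
  · obtain ⟨r', ⟨hr'r, hr'⟩, hsub⟩ := exists_Ico_subset_of_mem_nhds' hslice hr
    have hs : (q, (F.g q (V q) + r') / 2) ∈ OmegaSet F.ω := hsub ⟨by linarith, by linarith⟩
    obtain ⟨w, hw1, hw2⟩ := exists_between (hag ▸ hmono hg hs (by linarith))
    filter_upwards [F.eventually_g_lt hq hs hw2, hVq.eventually_lt continuousAt_const hw1, hD]
      with t hlt hwt hDt
    linarith [hlt _ hwt.le hDt]

end Inverse

section Saturation

def saturatedSet (F : FluxData) (V : ℝ → ℝ) : Set ℝ :=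
  {t | t ∈ Icc (0:ℝ) 1 ∧ F.aplus t ≤ ENNReal.ofReal (V t)}

def HasRealAplus (F : FluxData) (aR aRd : ℝ → ℝ) : Prop :=
  ∀ u ∈ Icc (0:ℝ) 1, F.aplus u ≠ ⊤ →
    F.aplus u = ENNReal.ofReal (aR u) ∧ HasDerivWithinAt aR (aRd u) (Icc (0:ℝ) 1) u

variable {F : FluxData} {σ q u u₀ w : ℝ} {V aR aRd : ℝ → ℝ}

theorem isCompact_saturatedSet (hc : ContinuousOn F.aplus (Icc (0:ℝ) 1))
    (hV : ContinuousOn V (Icc (0:ℝ) 1)) : IsCompact (F.saturatedSet V) :=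
  isCompact_Icc.of_isClosed_subset
    (isClosed_Icc.isClosed_le hc (ENNReal.continuous_ofReal.comp_continuousOn hV))
    fun _ ht => ht.1

theorem one_notMem_saturatedSet (hV1 : V 1 = 0) : 1 ∉ F.saturatedSet V := fun h => by
  have := h.2
  rw [hV1, ENNReal.ofReal_zero, nonpos_iff_eq_zero] at this
  exact (F.aplus_pos 1 h.1).ne' this

theorem aplus_ne_top_of_mem_saturatedSet (ht : q ∈ F.saturatedSet V) : F.aplus q ≠ ⊤ :=
  (ht.2.trans_lt ENNReal.ofReal_lt_top).ne

theorem Hfun_eq_zero_of_mem_saturatedSet (ht : q ∈ F.saturatedSet V) : Hfun F q (V q) = 0 :=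
  if_neg (not_lt.2 ht.2)

theorem Hfun_pos_of_notMem_saturatedSet (hV : IsVsol F σ V) (hq : q ∈ Ioo (0:ℝ) 1)
    (hqS : q ∉ F.saturatedSet V) : 0 < Hfun F q (V q) := by
  have hlt : ENNReal.ofReal (V q) < F.aplus q := not_le.1 fun h => hqS ⟨Ioo_subset_Icc_self hq, h⟩
  rw [Hfun, if_pos hlt]
  exact one_div_pos.2 (F.g_pos (F.mk_mem_DSet (Ioo_subset_Icc_self hq) (hV.2.2.1 q hq) hlt)
    (hV.2.2.1 q hq))

theorem continuousAt_Hfun (hc : ContinuousOn F.aplus (Icc (0:ℝ) 1)) (hV : IsVsol F σ V)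
    (hq : q ∈ Ioo (0:ℝ) 1) (hqS : q ∉ F.saturatedSet V) :
    ContinuousAt (fun t => Hfun F t (V t)) q := by
  have hU : ∀ᶠ t in 𝓝 q, t ∈ Ioo (0:ℝ) 1 ∧ ENNReal.ofReal (V t) < F.aplus t := by
    filter_upwards [(isOpen_Ioo.sdiff (isCompact_saturatedSet hc hV.1).isClosed).mem_nhds
      ⟨hq, hqS⟩] with t ht
    exact ⟨ht.1, not_le.1 fun h => ht.2 ⟨Ioo_subset_Icc_self ht.1, h⟩⟩
  have hD : ∀ᶠ t in 𝓝 q, (t, V t) ∈ DSet F.aplus := hU.mono fun t ht =>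
    F.mk_mem_DSet (Ioo_subset_Icc_self ht.1) (hV.2.2.1 t ht.1) ht.2
  have hg : ContinuousAt (fun t => 1 / F.g t (V t)) q :=
    continuousAt_const.div (continuousAt_g_comp hq (hV.1.continuousAt (Icc_mem_nhds hq.1 hq.2)) hD)
      (F.g_pos hD.self_of_nhds (hV.2.2.1 q hq)).ne'
  exact hg.congr (hU.mono fun t ht => (if_pos ht.2).symm)

theorem eventually_abs_Hfun_le (hV : IsVsol F σ V) (hq : q ∈ Ioo (0:ℝ) 1) :
    ∃ M, ∀ᶠ t in 𝓝 q, |Hfun F t (V t)| ≤ M := by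
  have hVq := hV.2.2.1 q hq
  have hVc : ContinuousAt V q := hV.1.continuousAt (Icc_mem_nhds hq.1 hq.2)
  have hq' := Ioo_subset_Icc_self hq
  obtain ⟨s, ⟨hs, has⟩, hs0⟩ : ∃ s, ((q, s) ∈ OmegaSet F.ω ∧ F.a q s < V q) ∧ 0 < s := by
    obtain ⟨d, -, hd⟩ := F.a_deriv_pos q 0 (F.mk_zero_mem_OmegaSet hq')
    have h0 : ∀ᶠ s in 𝓝 0, (q, s) ∈ OmegaSet F.ω ∧ F.a q s < V q :=
      Filter.Eventually.and
        ((F.isOpen_setOf_mk_mem_OmegaSet q).mem_nhds (F.mk_zero_mem_OmegaSet hq'))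
        (hd.continuousAt.eventually_lt continuousAt_const (by rwa [F.a_zero hq']))
    exact ((h0.filter_mono nhdsWithin_le_nhds).and (self_mem_nhdsWithin (s := Ioi 0))).exists
  obtain ⟨w, hw1, hw2⟩ := exists_between has
  refine ⟨1 / s, ?_⟩
  filter_upwards [F.eventually_lt_g hq hs hw1, continuousAt_const.eventually_lt hVc hw2,
    continuousAt_const.eventually_lt hVc hVq, Icc_mem_nhds hq.1 hq.2] with t hg hwt hVt ht
  rw [Hfun]
  split_ifs with hlt
  · have hst := hg _ hwt.le (F.mk_mem_DSet ht hVt hlt)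
    rw [abs_of_pos (one_div_pos.2 (hs0.trans hst))]
    exact one_div_le_one_div_of_le hs0 hst.le
  · rw [abs_zero]
    positivity

theorem aestronglyMeasurable_Hfun (hc : ContinuousOn F.aplus (Icc (0:ℝ) 1))
    (hV : IsVsol F σ V) :
    AEStronglyMeasurable (fun t => Hfun F t (V t)) (volume.restrict (Ioo (0:ℝ) 1)) := by
  have hS := (isCompact_saturatedSet hc hV.1).isClosed
  rw [← sdiff_union_inter (Ioo (0:ℝ) 1) (F.saturatedSet V), aestronglyMeasurable_union_iff]
  constructor
  · exact ContinuousOn.aestronglyMeasurable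
      (fun t ht => (continuousAt_Hfun hc hV ht.1 ht.2).continuousWithinAt)
      (measurableSet_Ioo.diff hS.measurableSet)
  · exact ContinuousOn.aestronglyMeasurable
      (continuousOn_const.congr fun t ht => Hfun_eq_zero_of_mem_saturatedSet ht.2)
      (measurableSet_Ioo.inter hS.measurableSet)

theorem locallyIntegrableOn_Hfun (hc : ContinuousOn F.aplus (Icc (0:ℝ) 1))
    (hV : IsVsol F σ V) : LocallyIntegrableOn (fun t => Hfun F t (V t)) (Ioo (0:ℝ) 1) := by
  intro q hq
  obtain ⟨M, hM⟩ := eventually_abs_Hfun_le hV hq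
  exact (Measure.FiniteAtFilter.integrableAtFilter
    ⟨_, Ioo_mem_nhds hq.1 hq.2, aestronglyMeasurable_Hfun hc hV⟩ (volume.finiteAt_nhds q)
    (isBoundedUnder_of_eventually_le hM)).filter_mono nhdsWithin_le_nhds

theorem intervalIntegrable_Hfun (hc : ContinuousOn F.aplus (Icc (0:ℝ) 1)) (hV : IsVsol F σ V)
    (hu : u ∈ Ioo (0:ℝ) 1) (hw : w ∈ Ioo (0:ℝ) 1) :
    IntervalIntegrable (fun t => Hfun F t (V t)) volume u w :=
  ((locallyIntegrableOn_Hfun hc hV).integrableOn_compact_subset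
    (ordConnected_Ioo.uIcc_subset hu hw) isCompact_uIcc).intervalIntegrable

theorem mem_saturatedSet_of_deriv_integral_Hfun_eq_zero
    (hc : ContinuousOn F.aplus (Icc (0:ℝ) 1)) (hV : IsVsol F σ V) (hu₀ : u₀ ∈ Ioo (0:ℝ) 1)
    (hu : u ∈ Ioo (0:ℝ) 1) (h : deriv (fun x => ∫ t in u₀..x, Hfun F t (V t)) u = 0) :
    u ∈ F.saturatedSet V := by
  by_contra huS
  have hderiv := intervalIntegral.integral_hasDerivAt_right (intervalIntegrable_Hfun hc hV hu₀ hu)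
    ⟨_, Ioo_mem_nhds hu.1 hu.2, aestronglyMeasurable_Hfun hc hV⟩ (continuousAt_Hfun hc hV hu huS)
  rw [hderiv.deriv] at h
  exact (Hfun_pos_of_notMem_saturatedSet hV hu huS).ne' h

theorem integral_Hfun_eq_of_uIcc_subset (hc : ContinuousOn F.aplus (Icc (0:ℝ) 1))
    (hV : IsVsol F σ V) (hu₀ : u₀ ∈ Ioo (0:ℝ) 1) (hu : u ∈ Ioo (0:ℝ) 1) (hw : w ∈ Ioo (0:ℝ) 1)
    (huw : uIcc u w ⊆ F.saturatedSet V) :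
    ∫ t in u₀..u, Hfun F t (V t) = ∫ t in u₀..w, Hfun F t (V t) := by
  rw [← intervalIntegral.integral_add_adjacent_intervals (intervalIntegrable_Hfun hc hV hu₀ hu)
    (intervalIntegrable_Hfun hc hV hu hw), intervalIntegral.integral_congr (g := fun _ => 0)
    fun t ht => Hfun_eq_zero_of_mem_saturatedSet (huw ht), intervalIntegral.integral_zero,
    add_zero]

theorem aR_le_of_mem_saturatedSet (hV : IsVsol F σ V) (haR : F.HasRealAplus aR aRd)
    (hq : q ∈ Ioo (0:ℝ) 1) (hqS : q ∈ F.saturatedSet V) : aR q ≤ V q := by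
  have h := hqS.2
  rw [(haR q hqS.1 (aplus_ne_top_of_mem_saturatedSet hqS)).1] at h
  exact (ENNReal.ofReal_le_ofReal_iff (hV.2.2.1 q hq).le).1 h

theorem hasDerivAt_sub_aR (hV : IsVsol F σ V) (haR : F.HasRealAplus aR aRd)
    (hq : q ∈ Ioo (0:ℝ) 1) (hqS : q ∈ F.saturatedSet V) :
    HasDerivAt (fun t => V t - aR t) (σ - aRd q) q := by
  have hVd := hV.2.2.2 q hq
  rw [Hfun_eq_zero_of_mem_saturatedSet hqS, mul_zero, sub_zero] at hVd
  exact hVd.sub ((haR q hqS.1 (aplus_ne_top_of_mem_saturatedSet hqS)).2.hasDerivAt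
    (Icc_mem_nhds hq.1 hq.2))

theorem eventually_lt_aR_of_notMem_saturatedSet (hc : ContinuousOn F.aplus (Icc (0:ℝ) 1))
    (haR : F.HasRealAplus aR aRd) (hq : q ∈ Ioo (0:ℝ) 1) (hqS : q ∈ F.saturatedSet V) :
    ∀ᶠ t in 𝓝 q, t ∉ F.saturatedSet V → V t < aR t := by
  have hI : Icc (0:ℝ) 1 ∈ 𝓝 q := Icc_mem_nhds hq.1 hq.2
  filter_upwards [hI, (hc.continuousAt hI).eventually_lt continuousAt_const
    (aplus_ne_top_of_mem_saturatedSet hqS).lt_top] with t ht htop htS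
  have hlt : ENNReal.ofReal (V t) < F.aplus t := not_le.1 fun h => htS ⟨ht, h⟩
  rw [(haR t ht htop.ne).1] at hlt
  exact (ENNReal.ofReal_lt_ofReal_iff'.1 hlt).1

theorem aRd_le_of_frequently_notMem_left (hc : ContinuousOn F.aplus (Icc (0:ℝ) 1))
    (hV : IsVsol F σ V) (haR : F.HasRealAplus aR aRd) (hq : q ∈ Ioo (0:ℝ) 1)
    (hqS : q ∈ F.saturatedSet V) (hfr : ∃ᶠ t in 𝓝[<] q, t ∉ F.saturatedSet V) : aRd q ≤ σ := by
  have := (hasDerivAt_sub_aR hV haR hq hqS).nonneg_of_frequently_lt_left <| hfr.mp <|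
    (eventually_lt_aR_of_notMem_saturatedSet hc haR hq hqS).filter_mono nhdsWithin_le_nhds |>.mono
      fun t ht htS => by linarith [ht htS, aR_le_of_mem_saturatedSet hV haR hq hqS]
  linarith

theorem le_aRd_of_frequently_notMem_right (hc : ContinuousOn F.aplus (Icc (0:ℝ) 1))
    (hV : IsVsol F σ V) (haR : F.HasRealAplus aR aRd) (hq : q ∈ Ioo (0:ℝ) 1)
    (hqS : q ∈ F.saturatedSet V) (hfr : ∃ᶠ t in 𝓝[>] q, t ∉ F.saturatedSet V) : σ ≤ aRd q := by
  have := (hasDerivAt_sub_aR hV haR hq hqS).nonpos_of_frequently_lt_right <| hfr.mp <|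
    (eventually_lt_aR_of_notMem_saturatedSet hc haR hq hqS).filter_mono nhdsWithin_le_nhds |>.mono
      fun t ht htS => by linarith [ht htS, aR_le_of_mem_saturatedSet hV haR hq hqS]
  linarith

theorem exists_aRd_eq_or_Icc_zero_subset (hc : ContinuousOn F.aplus (Icc (0:ℝ) 1))
    (hV : IsVsol F σ V) (haR : F.HasRealAplus aR aRd) (huS : u ∈ F.saturatedSet V) :
    (∃ c ∈ Ioo (0:ℝ) 1, aRd c = σ ∧ uIcc u c ⊆ F.saturatedSet V) ∨
      Icc 0 u ⊆ F.saturatedSet V := by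
  obtain ⟨a, b, hau, hub, habS, hfa, hfb⟩ :=
    IsCompact.exists_Icc_subset_frequently_notMem (isCompact_saturatedSet hc hV.1) huS
  have hab := hau.trans hub
  have haS := habS (left_mem_Icc.2 hab)
  have hbS := habS (right_mem_Icc.2 hab)
  have hb1 : b < 1 := hbS.1.2.lt_of_ne fun h => one_notMem_saturatedSet hV.2.1 (h ▸ hbS)
  rcases haS.1.1.eq_or_lt with rfl | ha0
  · exact .inr ((Icc_subset_Icc_right hub).trans habS)
  have hIoo : Icc a b ⊆ Ioo 0 1 := fun x hx => ⟨ha0.trans_le hx.1, hx.2.trans_lt hb1⟩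
  obtain ⟨c, hcab, hcσ⟩ := exists_hasDerivWithinAt_eq_of_ge_of_le hab
    (fun x hx => ((haR x (habS hx).1 (aplus_ne_top_of_mem_saturatedSet (habS hx))).2.mono
      (Icc_subset_Icc ha0.le hb1.le)))
    (aRd_le_of_frequently_notMem_left hc hV haR (hIoo (left_mem_Icc.2 hab)) haS hfa)
    (le_aRd_of_frequently_notMem_right hc hV haR (hIoo (right_mem_Icc.2 hab)) hbS hfb)
  exact .inl ⟨c, hIoo hcab, hcσ, (ordConnected_Icc.uIcc_subset ⟨hau, hub⟩ hcab).trans habS⟩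

end Saturation

end FluxData

theorem stmt13_general (F : FluxData) (hc : ContinuousOn F.aplus (Set.Icc (0:ℝ) 1))
    (𝒱 : ℝ → ℝ → ℝ) (h𝒱 : ∀ σ : ℝ, 0 ≤ σ → IsVsol F σ (𝒱 σ))
    (σs : ℝ) (hσs : σs = sInf {σ : ℝ | 0 ≤ σ ∧ 𝒱 σ 0 = 0})
    (aR aRd : ℝ → ℝ)
    (haR : ∀ u ∈ Set.Icc (0:ℝ) 1, F.aplus u ≠ ⊤ →
      F.aplus u = ENNReal.ofReal (aR u) ∧ HasDerivWithinAt aR (aRd u) (Set.Icc (0:ℝ) 1) u)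
    (σ : ℝ) (hσ : σs ≤ σ) (u₀ : ℝ) (hu₀ : u₀ ∈ Set.Ioo (0:ℝ) 1)
    (G : ℝ → ℝ) (hG : ∀ u : ℝ, G u = ∫ t in u₀..u, Hfun F t (𝒱 σ t))
    (hW : {u : ℝ | u ∈ Set.Icc (0:ℝ) 1 ∧ F.aplus u ≠ ⊤ ∧ aRd u = σ}.Finite) :
    {ξ : ℝ | ∃ u ∈ Set.Ioo (0:ℝ) 1, G u = ξ ∧ deriv G u = 0}.Finite := by
  have hσs0 : 0 ≤ σs := hσs ▸ Real.sInf_nonneg fun _ hσ' => hσ'.1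
  have hV : IsVsol F σ (𝒱 σ) := h𝒱 σ (hσs0.trans hσ)
  set S := F.saturatedSet (𝒱 σ)
  have hGS : ∀ u ∈ Ioo (0:ℝ) 1, ∀ w ∈ Ioo (0:ℝ) 1, uIcc u w ⊆ S → G u = G w := by
    intro u hu w hw huw
    rw [hG, hG]
    exact FluxData.integral_Hfun_eq_of_uIcc_subset hc hV hu₀ hu hw huw
  have hcrit : {ξ | ∃ u ∈ Ioo (0:ℝ) 1, G u = ξ ∧ deriv G u = 0} ⊆
      G '' {u | u ∈ Icc (0:ℝ) 1 ∧ F.aplus u ≠ ⊤ ∧ aRd u = σ} ∪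
        G '' {u | u ∈ Ioo (0:ℝ) 1 ∧ Icc 0 u ⊆ S} := by
    rintro _ ⟨u, hu, rfl, hderiv⟩
    rw [funext hG] at hderiv
    have huS := FluxData.mem_saturatedSet_of_deriv_integral_Hfun_eq_zero hc hV hu₀ hu hderiv
    rcases FluxData.exists_aRd_eq_or_Icc_zero_subset hc hV haR huS with ⟨c, hc01, hcσ, huc⟩ | h0
    · have hcS : c ∈ S := huc right_mem_uIcc
      exact .inl ⟨c, ⟨hcS.1, FluxData.aplus_ne_top_of_mem_saturatedSet hcS, hcσ⟩,
        (hGS u hu c hc01 huc).symm⟩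
    · exact .inr ⟨u, ⟨hu, h0⟩, rfl⟩
  refine ((hW.image G).union (Set.Subsingleton.finite ?_)).subset hcrit
  rintro _ ⟨u, ⟨hu, hu0⟩, rfl⟩ _ ⟨w, ⟨hw, hw0⟩, rfl⟩
  refine hGS u hu w hw ?_
  rcases le_total u w with h | h
  · exact (uIcc_of_le h).trans_subset ((Icc_subset_Icc_left hu.1.le).trans hw0)
  · exact (uIcc_of_ge h).trans_subset ((Icc_subset_Icc_left hw.1.le).trans hu0)

theorem stmt13 (F : FluxData) (hc : ContinuousOn F.aplus (Set.Icc (0:ℝ) 1))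
    (𝒱 : ℝ → ℝ → ℝ) (h𝒱 : ∀ σ : ℝ, 0 ≤ σ → IsVsol F σ (𝒱 σ))
    (σs : ℝ) (hσs : σs = sInf {σ : ℝ | 0 ≤ σ ∧ 𝒱 σ 0 = 0})
    (hne : {σ : ℝ | 0 ≤ σ ∧ 𝒱 σ 0 = 0}.Nonempty)
    (aR aRd : ℝ → ℝ)
    (haR : ∀ u ∈ Set.Icc (0:ℝ) 1, F.aplus u ≠ ⊤ →
      F.aplus u = ENNReal.ofReal (aR u) ∧ HasDerivWithinAt aR (aRd u) (Set.Icc (0:ℝ) 1) u)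
    (σ : ℝ) (hσ : σs ≤ σ) (u₀ : ℝ) (hu₀ : u₀ ∈ Set.Ioo (0:ℝ) 1)
    (G : ℝ → ℝ) (hG : ∀ u : ℝ, G u = ∫ t in u₀..u, Hfun F t (𝒱 σ t))
    (hW : {u : ℝ | u ∈ Set.Icc (0:ℝ) 1 ∧ F.aplus u ≠ ⊤ ∧ aRd u = σ}.Finite) :
    {ξ : ℝ | ∃ u ∈ Set.Ioo (0:ℝ) 1, G u = ξ ∧ deriv G u = 0}.Finite :=
  stmt13_general F hc 𝒱 h𝒱 σs hσs aR aRd haR σ hσ u₀ hu₀ G hG hW
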